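/- arXiv:1810.06474 — 2 statements merged into one kernel-verified Lean document; each statement's English description precedes it below -/
import Mathlib

section
/- For interval-valued random variables X₁, X₂ with centers C₁, C₂ and ranges R₁, R₂ ≥ 0, for k ∈ {1,2,3} the symbolic correlation Cor_k(X₁, X₂) := (Cov(C₁,C₂) + δ_k E(R₁R₂)) / √((Var(C₁) + δ_k E(R₁²))(Var(C₂) + δ_k E(R₂²))) satisfies -1 ≤ Cor_k(X₁, X₂) ≤ 1, provided the denominator is positive. -/
/-!
The covariance and `E(R₁R₂)` are both L² inner products, so Cauchy–Schwarz bounds their squares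
by the corresponding products of variances and second moments. Since `δ_k ≥ 0`, the numerator of
`Cor_k` then squares to at most its squared denominator once the cross term is absorbed by AM-GM.
-/

open MeasureTheory ProbabilityTheory

/-- Covariance of two real random variables. -/
noncomputable def covf {Ω : Type*} [MeasurableSpace Ω] (μ : Measure Ω) (X Y : Ω → ℝ) : ℝ :=
  ∫ ω, (X ω - ∫ x, X x ∂μ) * (Y ω - ∫ x, Y x ∂μ) ∂μ

/-- The weights δ₁ = 0, δ₂ = 1/4, δ₃ = 1/12. -/
noncomputable def delta (k : ℕ) : ℝ := if k = 1 then 0 else if k = 2 then 1/4 else 1/12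

theorem MeasureTheory.MemLp.real_inner_toLp {α : Type*} [MeasurableSpace α] {μ : Measure α}
    {f g : α → ℝ} (hf : MemLp f 2 μ) (hg : MemLp g 2 μ) :
    inner ℝ hf.toLp hg.toLp = ∫ a, f a * g a ∂μ := by
  rw [L2.inner_def]
  refine integral_congr_ae ?_
  filter_upwards [hf.coeFn_toLp, hg.coeFn_toLp] with a hfa hga
  simp [hfa, hga, mul_comm]

theorem sq_integral_mul_le_integral_sq_mul_integral_sq {α : Type*} [MeasurableSpace α]
    {μ : Measure α} {f g : α → ℝ} (hf : MemLp f 2 μ) (hg : MemLp g 2 μ) :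
    (∫ a, f a * g a ∂μ) ^ 2 ≤ (∫ a, f a ^ 2 ∂μ) * ∫ a, g a ^ 2 ∂μ := by
  simpa only [hf.real_inner_toLp, hg.real_inner_toLp, hf.real_inner_toLp hg, sq] using
    real_inner_mul_inner_self_le hf.toLp hg.toLp

theorem sq_covf_le_variance_mul_variance {Ω : Type*} [MeasurableSpace Ω] {μ : Measure Ω}
    [IsFiniteMeasure μ] {X Y : Ω → ℝ} (hX : MemLp X 2 μ) (hY : MemLp Y 2 μ) :
    covf μ X Y ^ 2 ≤ variance X μ * variance Y μ := by
  rw [variance_eq_integral hX.aemeasurable, variance_eq_integral hY.aemeasurable]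
  exact sq_integral_mul_le_integral_sq_mul_integral_sq
    (hX.sub (memLp_const _)) (hY.sub (memLp_const _))

theorem delta_nonneg (k : ℕ) : 0 ≤ delta k := by
  unfold delta
  split_ifs <;> norm_num

-- AM-GM on the cross term: `2 c r ≤ 2 √(x b) √(a y) ≤ x b + a y`.
theorem sq_add_mul_le_of_sq_le {x y a b c r d : ℝ} (hx : 0 ≤ x) (hy : 0 ≤ y) (ha : 0 ≤ a)
    (hb : 0 ≤ b) (hd : 0 ≤ d) (hc : c ^ 2 ≤ x * y) (hr : r ^ 2 ≤ a * b) :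
    (c + d * r) ^ 2 ≤ (x + d * a) * (y + d * b) := by
  have hcr : (c * r) ^ 2 ≤ (x * b) * (a * y) := by
    calc (c * r) ^ 2 = c ^ 2 * r ^ 2 := by ring
      _ ≤ (x * y) * (a * b) := mul_le_mul hc hr (sq_nonneg r) (by positivity)
      _ = (x * b) * (a * y) := by ring
  have hcross : 2 * (c * r) ≤ x * b + a * y := by
    refine (abs_le_of_sq_le_sq' ?_ (by positivity)).2
    nlinarith [sq_nonneg (x * b - a * y)]
  nlinarith [mul_le_mul_of_nonneg_left hcross hd, mul_le_mul_of_nonneg_left hr (sq_nonneg d)]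

theorem symbolic_cor_bounds_general {Ω : Type*} [MeasurableSpace Ω] (μ : Measure Ω)
    [IsProbabilityMeasure μ] (C1 C2 R1 R2 : Ω → ℝ)
    (hC1 : MemLp C1 2 μ) (hC2 : MemLp C2 2 μ) (hR1 : MemLp R1 2 μ) (hR2 : MemLp R2 2 μ)
    (k : ℕ)
    (hden : 0 < Real.sqrt ((variance C1 μ + delta k * ∫ ω, (R1 ω) ^ 2 ∂μ) *
      (variance C2 μ + delta k * ∫ ω, (R2 ω) ^ 2 ∂μ))) :
    -1 ≤ (covf μ C1 C2 + delta k * ∫ ω, R1 ω * R2 ω ∂μ) /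
        Real.sqrt ((variance C1 μ + delta k * ∫ ω, (R1 ω) ^ 2 ∂μ) *
          (variance C2 μ + delta k * ∫ ω, (R2 ω) ^ 2 ∂μ)) ∧
      (covf μ C1 C2 + delta k * ∫ ω, R1 ω * R2 ω ∂μ) /
        Real.sqrt ((variance C1 μ + delta k * ∫ ω, (R1 ω) ^ 2 ∂μ) *
          (variance C2 μ + delta k * ∫ ω, (R2 ω) ^ 2 ∂μ)) ≤ 1 := by
  have hnum := sq_add_mul_le_of_sq_le (variance_nonneg C1 μ) (variance_nonneg C2 μ)
    (integral_nonneg fun ω => sq_nonneg (R1 ω)) (integral_nonneg fun ω => sq_nonneg (R2 ω))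
    (delta_nonneg k) (sq_covf_le_variance_mul_variance hC1 hC2)
    (sq_integral_mul_le_integral_sq_mul_integral_sq hR1 hR2)
  rw [← abs_le, abs_div, abs_of_pos hden, div_le_one hden]
  exact Real.abs_le_sqrt hnum

/-- For k ∈ {1,2,3}, the symbolic correlation lies in [-1, 1]. -/
theorem symbolic_cor_bounds {Ω : Type*} [MeasurableSpace Ω] (μ : Measure Ω)
    [IsProbabilityMeasure μ] (C1 C2 R1 R2 : Ω → ℝ)
    (hC1 : MemLp C1 2 μ) (hC2 : MemLp C2 2 μ) (hR1 : MemLp R1 2 μ) (hR2 : MemLp R2 2 μ)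
    (hC1m : AEMeasurable C1 μ) (hC2m : AEMeasurable C2 μ)
    (hR1m : AEMeasurable R1 μ) (hR2m : AEMeasurable R2 μ)
    (hR1pos : ∀ ω, 0 ≤ R1 ω) (hR2pos : ∀ ω, 0 ≤ R2 ω)
    (k : ℕ) (hk : k ∈ ({1, 2, 3} : Set ℕ))
    (hden : 0 < Real.sqrt ((variance C1 μ + delta k * ∫ ω, (R1 ω) ^ 2 ∂μ) *
      (variance C2 μ + delta k * ∫ ω, (R2 ω) ^ 2 ∂μ))) :
    -1 ≤ (covf μ C1 C2 + delta k * ∫ ω, R1 ω * R2 ω ∂μ) /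
        Real.sqrt ((variance C1 μ + delta k * ∫ ω, (R1 ω) ^ 2 ∂μ) *
          (variance C2 μ + delta k * ∫ ω, (R2 ω) ^ 2 ∂μ)) ∧
      (covf μ C1 C2 + delta k * ∫ ω, R1 ω * R2 ω ∂μ) /
        Real.sqrt ((variance C1 μ + delta k * ∫ ω, (R1 ω) ^ 2 ∂μ) *
          (variance C2 μ + delta k * ∫ ω, (R2 ω) ^ 2 ∂μ)) ≤ 1 :=
  symbolic_cor_bounds_general μ C1 C2 R1 R2 hC1 hC2 hR1 hR2 k hden
end

section
/- In the micro-data model A_j = C_j + U R_j/2 and A_l = C_l + U R_l/2 with a common weight U independent of (C_j, R_j, C_l, R_l), E(U) = 0 and Var(U) = 1 (e.g., U uniform on {-1, 1}), one has Cov(A_j, A_l) = Cov(C_j, C_l) + (1/4)E(R_jR_l) and Var(A_j) = Var(C_j) + (1/4)E(R_j²), i.e., the micro-data covariance matches the second symbolic covariance definition Σ₂. -/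
open MeasureTheory ProbabilityTheory

/-! Since `U` is centred and independent of the centres and ranges, `U` kills every term in which
it appears linearly, while `E(U²) = Var U = 1` turns the `U²`-term into `E(R_j R_l)`. Expanding
`Cov(C_j + U R_j / 2, C_l + U R_l / 2)` bilinearly leaves exactly `Cov(C_j, C_l) + E(R_j R_l) / 4`;
the variance is the case `j = l`. -/

theorem covf_eq_covariance {Ω : Type*} [MeasurableSpace Ω] (μ : Measure Ω) (X Y : Ω → ℝ) :
    covf μ X Y = cov[X, Y; μ] := rfl

namespace ProbabilityTheory

variable {Ω : Type*} [MeasurableSpace Ω] {μ : Measure Ω} {U X Y : Ω → ℝ}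

theorem IndepFun.memLp_two_mul (hUX : IndepFun U X μ) (hU : MemLp U 2 μ) (hX : MemLp X 2 μ) :
    MemLp (U * X) 2 μ := by
  rw [memLp_two_iff_integrable_sq (hU.1.mul hX.1)]
  have hsq : IndepFun (U ^ 2) (X ^ 2) μ :=
    hUX.comp (measurable_id.pow_const 2 : Measurable fun x : ℝ ↦ x ^ 2)
      (measurable_id.pow_const 2 : Measurable fun x : ℝ ↦ x ^ 2)
  have h := hsq.integrable_mul hU.integrable_sq hX.integrable_sq
  rw [← mul_pow] at h
  exact h

variable [IsProbabilityMeasure μ]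

theorem covariance_mul_right_eq_zero (hUXY : IndepFun U (fun ω ↦ (X ω, Y ω)) μ)
    (hU : MemLp U 2 μ) (hX : MemLp X 2 μ) (hY : MemLp Y 2 μ) (hU0 : μ[U] = 0) :
    cov[X, U * Y; μ] = 0 := by
  have hUY : IndepFun U Y μ := hUXY.comp measurable_id measurable_snd
  have hUXY' : IndepFun U (X * Y) μ := hUXY.comp measurable_id (measurable_fst.mul measurable_snd)
  have hmean : μ[U * Y] = 0 := by
    rw [hUY.integral_mul_eq_mul_integral hU.1 hY.1, hU0, zero_mul]
  have hcross : μ[X * (U * Y)] = 0 := by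
    rw [mul_left_comm, hUXY'.integral_mul_eq_mul_integral hU.1 (hX.1.mul hY.1), hU0, zero_mul]
  rw [covariance_eq_sub hX (hUY.memLp_two_mul hU hY), hmean, hcross, mul_zero, sub_zero]

theorem covariance_mul_mul (hUXY : IndepFun U (fun ω ↦ (X ω, Y ω)) μ)
    (hU : MemLp U 2 μ) (hX : MemLp X 2 μ) (hY : MemLp Y 2 μ) (hU0 : μ[U] = 0)
    (hUvar : Var[U; μ] = 1) :
    cov[U * X, U * Y; μ] = μ[X * Y] := by
  have hUX : IndepFun U X μ := hUXY.comp measurable_id measurable_fst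
  have hUY : IndepFun U Y μ := hUXY.comp measurable_id measurable_snd
  have hsq : IndepFun (U ^ 2) (X * Y) μ :=
    hUXY.comp (measurable_id.pow_const 2 : Measurable fun x : ℝ ↦ x ^ 2)
      (measurable_fst.mul measurable_snd)
  have hU2 : μ[U ^ 2] = 1 := by
    have h := variance_eq_sub hU
    rw [hUvar, hU0] at h
    linarith
  have hmean : μ[U * X] = 0 := by
    rw [hUX.integral_mul_eq_mul_integral hU.1 hX.1, hU0, zero_mul]
  have hprod : μ[(U * X) * (U * Y)] = μ[X * Y] := by
    rw [mul_mul_mul_comm, ← sq, hsq.integral_mul_eq_mul_integral hU.integrable_sq.1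
      (hX.1.mul hY.1), hU2, one_mul]
  rw [covariance_eq_sub (hUX.memLp_two_mul hU hX) (hUY.memLp_two_mul hU hY), hmean, hprod,
    zero_mul, sub_zero]

theorem covariance_add_mul_div_two {C R C' R' : Ω → ℝ}
    (hind : IndepFun U (fun ω ↦ (C ω, R ω, C' ω, R' ω)) μ) (hU : MemLp U 2 μ)
    (hC : MemLp C 2 μ) (hR : MemLp R 2 μ) (hC' : MemLp C' 2 μ) (hR' : MemLp R' 2 μ)
    (hU0 : μ[U] = 0) (hUvar : Var[U; μ] = 1) :
    cov[fun ω ↦ C ω + U ω * R ω / 2, fun ω ↦ C' ω + U ω * R' ω / 2; μ] =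
      cov[C, C'; μ] + 1 / 4 * μ[R * R'] := by
  have hCR' : IndepFun U (fun ω ↦ (C ω, R' ω)) μ :=
    hind.comp measurable_id (by fun_prop : Measurable fun p : ℝ × ℝ × ℝ × ℝ ↦ (p.1, p.2.2.2))
  have hC'R : IndepFun U (fun ω ↦ (C' ω, R ω)) μ :=
    hind.comp measurable_id (by fun_prop : Measurable fun p : ℝ × ℝ × ℝ × ℝ ↦ (p.2.2.1, p.2.1))
  have hRR' : IndepFun U (fun ω ↦ (R ω, R' ω)) μ :=
    hind.comp measurable_id (by fun_prop : Measurable fun p : ℝ × ℝ × ℝ × ℝ ↦ (p.2.1, p.2.2.2))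
  have hUR : IndepFun U R μ := hC'R.comp measurable_id measurable_snd
  have hUR' : IndepFun U R' μ := hCR'.comp measurable_id measurable_snd
  have hURL2 : MemLp (fun ω ↦ (U * R) ω / 2) 2 μ := by
    simpa only [div_eq_mul_inv] using (hUR.memLp_two_mul hU hR).mul_const 2⁻¹
  have hUR'L2 : MemLp (fun ω ↦ (U * R') ω / 2) 2 μ := by
    simpa only [div_eq_mul_inv] using (hUR'.memLp_two_mul hU hR').mul_const 2⁻¹
  change cov[C + fun ω ↦ (U * R) ω / 2, C' + fun ω ↦ (U * R') ω / 2; μ] = _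
  rw [covariance_add_left hC hURL2 (hC'.add hUR'L2), covariance_add_right hC hC' hUR'L2,
    covariance_add_right hURL2 hC' hUR'L2, covariance_fun_div_right, covariance_fun_div_left,
    covariance_fun_div_left, covariance_fun_div_right, covariance_comm (U * R) C',
    covariance_mul_right_eq_zero hCR' hU hC hR' hU0,
    covariance_mul_right_eq_zero hC'R hU hC' hR hU0, covariance_mul_mul hRR' hU hR hR' hU0 hUvar]
  ring

end ProbabilityTheory

theorem microdata_common_weight_sigma2_general {Ω : Type*} [MeasurableSpace Ω] (μ : Measure Ω)
    [IsProbabilityMeasure μ] (Cj Rj Cl Rl U : Ω → ℝ)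
    (hCj : MemLp Cj 2 μ) (hRj : MemLp Rj 2 μ) (hCl : MemLp Cl 2 μ) (hRl : MemLp Rl 2 μ)
    (hU : MemLp U 2 μ)
    (hindep : IndepFun U (fun ω => (Cj ω, Rj ω, Cl ω, Rl ω)) μ)
    (hU0 : ∫ ω, U ω ∂μ = 0) (hUvar : variance U μ = 1) :
    covf μ (fun ω => Cj ω + U ω * Rj ω / 2) (fun ω => Cl ω + U ω * Rl ω / 2) =
        covf μ Cj Cl + (1/4) * ∫ ω, Rj ω * Rl ω ∂μ ∧
      variance (fun ω => Cj ω + U ω * Rj ω / 2) μ =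
        variance Cj μ + (1/4) * ∫ ω, (Rj ω) ^ 2 ∂μ := by
  have hindep_jj : IndepFun U (fun ω ↦ (Cj ω, Rj ω, Cj ω, Rj ω)) μ :=
    hindep.comp measurable_id
      (by fun_prop : Measurable fun p : ℝ × ℝ × ℝ × ℝ ↦ (p.1, p.2.1, p.1, p.2.1))
  have hAj : AEMeasurable (fun ω ↦ Cj ω + U ω * Rj ω / 2) μ :=
    hCj.1.aemeasurable.add ((hU.1.aemeasurable.mul hRj.1.aemeasurable).div_const 2)
  rw [covf_eq_covariance, covf_eq_covariance]
  refine ⟨covariance_add_mul_div_two hindep hU hCj hRj hCl hRl hU0 hUvar, ?_⟩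
  rw [← covariance_self hAj, ← covariance_self hCj.1.aemeasurable,
    covariance_add_mul_div_two hindep_jj hU hCj hRj hCj hRj hU0 hUvar]
  simp only [Pi.mul_apply, sq]

/-- Common weight U with Var(U) = 1 yields the second symbolic covariance Σ₂. -/
theorem microdata_common_weight_sigma2 {Ω : Type*} [MeasurableSpace Ω] (μ : Measure Ω)
    [IsProbabilityMeasure μ] (Cj Rj Cl Rl U : Ω → ℝ)
    (hCj : MemLp Cj 2 μ) (hRj : MemLp Rj 2 μ) (hCl : MemLp Cl 2 μ) (hRl : MemLp Rl 2 μ)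
    (hU : MemLp U 2 μ)
    (hCjm : Measurable Cj) (hRjm : Measurable Rj) (hClm : Measurable Cl) (hRlm : Measurable Rl)
    (hUm : Measurable U)
    (hRjpos : ∀ ω, 0 ≤ Rj ω) (hRlpos : ∀ ω, 0 ≤ Rl ω)
    (hindep : IndepFun U (fun ω => (Cj ω, Rj ω, Cl ω, Rl ω)) μ)
    (hU0 : ∫ ω, U ω ∂μ = 0) (hUvar : variance U μ = 1) :
    covf μ (fun ω => Cj ω + U ω * Rj ω / 2) (fun ω => Cl ω + U ω * Rl ω / 2) =
        covf μ Cj Cl + (1/4) * ∫ ω, Rj ω * Rl ω ∂μ ∧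
      variance (fun ω => Cj ω + U ω * Rj ω / 2) μ =
        variance Cj μ + (1/4) * ∫ ω, (Rj ω) ^ 2 ∂μ :=
  microdata_common_weight_sigma2_general μ Cj Rj Cl Rl U hCj hRj hCl hRl hU hindep hU0 hUvar
end
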